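/- arXiv:1912.06205 — 4 statements merged into one kernel-verified Lean document; each statement's English description precedes it below -/
import Mathlib

section
/- Let X and Z be complex Banach spaces, ι : Z → X a continuous linear map (the embedding), A : Z → X a continuous linear operator, B : X → X a continuous linear operator, and ω₀, K > 0. Assume that for every ω ∈ ℝ with |ω| > ω₀ there exists a continuous linear map R_ω : X → Z such that (iω·ι − A) ∘ R_ω = id_X and R_ω ∘ (iω·ι − A) = id_Z, and ‖ι ∘ R_ω‖_{ℒ(X)} ≤ K/|ω|. Then for every ω ∈ ℝ with |ω| > max(ω₀, K·‖B‖) the operator iω·ι − A − B∘ι : Z → X has a two-sided continuous inverse S_ω : X → Z, and for every ω with |ω| ≥ max(ω₀, 2K·‖B‖) one has ‖ι ∘ S_ω‖_{ℒ(X)} ≤ 2K/|ω|. -/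
/-- Bounded-perturbation resolvent lemma: if `(iω·ι - A)` is invertible with resolvent bound
`K/|ω|` for `|ω| > ω₀`, then `(iω·ι - A - B∘ι)` is invertible for
`|ω| > max(ω₀, K‖B‖)`, with bound `2K/|ω|` for `|ω| ≥ max(ω₀, 2K‖B‖)`. -/
theorem bounded_perturbation_resolvent
    {X Z : Type*} [NormedAddCommGroup X] [NormedSpace ℂ X] [CompleteSpace X]
    [NormedAddCommGroup Z] [NormedSpace ℂ Z] [CompleteSpace Z]
    (ι : Z →L[ℂ] X) (A : Z →L[ℂ] X) (B : X →L[ℂ] X)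
    (ω₀ K : ℝ) (hω₀ : 0 < ω₀) (hK : 0 < K)
    (hres : ∀ ω : ℝ, ω₀ < |ω| → ∃ R : X →L[ℂ] Z,
      ((Complex.I * (ω : ℂ)) • ι - A).comp R = ContinuousLinearMap.id ℂ X ∧
      R.comp ((Complex.I * (ω : ℂ)) • ι - A) = ContinuousLinearMap.id ℂ Z ∧
      ‖ι.comp R‖ ≤ K / |ω|) :
    ∀ ω : ℝ, max ω₀ (K * ‖B‖) < |ω| → ∃ S : X →L[ℂ] Z,
      ((Complex.I * (ω : ℂ)) • ι - A - B.comp ι).comp S = ContinuousLinearMap.id ℂ X ∧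
      S.comp ((Complex.I * (ω : ℂ)) • ι - A - B.comp ι) = ContinuousLinearMap.id ℂ Z ∧
      (max ω₀ (2 * K * ‖B‖) ≤ |ω| → ‖ι.comp S‖ ≤ 2 * K / |ω|) := by
  intro ω hω
  have hωω₀ : ω₀ < |ω| := lt_of_le_of_lt (le_max_left _ _) hω
  have hωpos : (0 : ℝ) < |ω| := hω₀.trans hωω₀
  obtain ⟨R, h1, h2, h3⟩ := hres ω hωω₀
  set D : Z →L[ℂ] X := (Complex.I * (ω : ℂ)) • ι - A with hD
  set t : X →L[ℂ] X := B.comp (ι.comp R) with htdef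
  have htn : ‖t‖ ≤ ‖B‖ * (K / |ω|) := by
    refine le_trans (ContinuousLinearMap.opNorm_comp_le _ _) ?_
    exact mul_le_mul_of_nonneg_left h3 (norm_nonneg B)
  have ht1 : ‖t‖ < 1 := by
    have hKB : K * ‖B‖ < |ω| := lt_of_le_of_lt (le_max_right _ _) hω
    have : ‖B‖ * (K / |ω|) < 1 := by
      rw [mul_div_assoc', div_lt_one hωpos, mul_comm]
      exact hKB
    exact lt_of_le_of_lt htn this
  set U : (X →L[ℂ] X)ˣ := Units.oneSub t ht1 with hU
  refine ⟨R.comp (↑U⁻¹ : X →L[ℂ] X), ?_, ?_, ?_⟩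
  · have htD : t.comp D = B.comp ι := by
      rw [htdef, ContinuousLinearMap.comp_assoc, ContinuousLinearMap.comp_assoc, h2,
        ContinuousLinearMap.comp_id]
    have hfact : D - B.comp ι = ((1 : X →L[ℂ] X) - t).comp D := by
      rw [ContinuousLinearMap.sub_comp, ContinuousLinearMap.one_def,
        ContinuousLinearMap.id_comp, htD]
    rw [hfact, ContinuousLinearMap.comp_assoc, ← ContinuousLinearMap.comp_assoc D R, h1,
      ContinuousLinearMap.id_comp]
    have : ((1 : X →L[ℂ] X) - t).comp (↑U⁻¹ : X →L[ℂ] X) = (↑U : X →L[ℂ] X) * ↑U⁻¹ := by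
      rw [hU, Units.val_oneSub]; rfl
    rw [this, U.mul_inv]; rfl
  · have htD : t.comp D = B.comp ι := by
      rw [htdef, ContinuousLinearMap.comp_assoc, ContinuousLinearMap.comp_assoc, h2,
        ContinuousLinearMap.comp_id]
    have hfact : D - B.comp ι = ((1 : X →L[ℂ] X) - t).comp D := by
      rw [ContinuousLinearMap.sub_comp, ContinuousLinearMap.one_def,
        ContinuousLinearMap.id_comp, htD]
    rw [hfact, ContinuousLinearMap.comp_assoc, ← ContinuousLinearMap.comp_assoc (↑U⁻¹ : X →L[ℂ] X)]
    have : (↑U⁻¹ : X →L[ℂ] X).comp ((1 : X →L[ℂ] X) - t) = (↑U⁻¹ : X →L[ℂ] X) * ↑U := by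
      rw [hU, Units.val_oneSub]; rfl
    rw [this, U.inv_mul, ContinuousLinearMap.one_def, ContinuousLinearMap.id_comp, h2]
  · intro hω2
    have h2KB : 2 * K * ‖B‖ ≤ |ω| := le_trans (le_max_right _ _) hω2
    have htn2 : ‖t‖ ≤ 1 / 2 := by
      refine le_trans htn ?_
      rw [mul_div_assoc', div_le_div_iff₀ hωpos (by norm_num : (0:ℝ) < 2)]
      nlinarith
    have hUinv : ‖(↑U⁻¹ : X →L[ℂ] X)‖ ≤ 2 := by
      have : (↑U⁻¹ : X →L[ℂ] X) = ∑' n : ℕ, t ^ n := rfl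
      rw [this]
      refine le_trans (tsum_geometric_le_of_norm_lt_one t ht1) ?_
      have h1n : ‖(1 : X →L[ℂ] X)‖ ≤ 1 := ContinuousLinearMap.norm_id_le
      have : (1 - ‖t‖)⁻¹ ≤ 2 := by
        rw [inv_le_comm₀ (by linarith) (by norm_num)]
        linarith
      linarith
    have : ι.comp (R.comp (↑U⁻¹ : X →L[ℂ] X)) = (ι.comp R).comp (↑U⁻¹ : X →L[ℂ] X) := by
      rw [ContinuousLinearMap.comp_assoc]
    rw [this]
    refine le_trans (ContinuousLinearMap.opNorm_comp_le _ _) ?_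
    calc ‖ι.comp R‖ * ‖(↑U⁻¹ : X →L[ℂ] X)‖ ≤ (K / |ω|) * 2 := by
          exact mul_le_mul h3 hUinv (norm_nonneg _) (by positivity)
      _ = 2 * K / |ω| := by ring
end

section
/- Let a ∈ ℝ and let λ ∈ ℂ satisfy λ ≠ −a and D_n(λ) ≠ 0 for all n ∈ ℤ, where D_n(λ) = λ² + n²λ + a(n² − a) + 1. Then there exists a constant K > 0 (depending on λ and a) such that for every n ∈ ℤ and every (f₁, f₂) ∈ ℂ², the 2×2 linear system (λ + n² − a)u₁ + u₂ = f₁, −u₁ + (λ + a)u₂ = f₂ has a unique solution (u₁, u₂) ∈ ℂ², and this solution satisfies n⁴·|u₁|² + |u₂|² ≤ K·(|f₁|² + |f₂|²). -/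
/-!
Write `D_n = (λ + n² - a)(λ + a) + 1`, the determinant of the `n`-th block. Since
`D_n = n²(λ + a) + (λ² - a² + 1)` with `λ + a ≠ 0`, we have `n²/D_n → 1/(λ + a)` and `1/D_n → 0`
as `|n| → ∞`; a convergent sequence indexed by `ℤ` is bounded, so both are bounded by some `C`
uniformly in `n`. Cramer's rule writes `n² u₁` and `u₂` as combinations of `f₁, f₂` with
coefficients built from `n²/D_n` and `1/D_n`, and Cauchy–Schwarz turns these into the
quadratic bound.
-/

open Filter Topology Bornology

section LinearSystem

variable {K : Type*} [Field K] {p q r s f₁ f₂ : K}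

theorem det_mul_fst_of_linear_system {u : K × K}
    (h : p * u.1 + q * u.2 = f₁ ∧ r * u.1 + s * u.2 = f₂) :
    (p * s - q * r) * u.1 = s * f₁ - q * f₂ := by
  linear_combination s * h.1 - q * h.2

theorem det_mul_snd_of_linear_system {u : K × K}
    (h : p * u.1 + q * u.2 = f₁ ∧ r * u.1 + s * u.2 = f₂) :
    (p * s - q * r) * u.2 = p * f₂ - r * f₁ := by
  linear_combination p * h.2 - r * h.1

theorem existsUnique_linear_system (hdet : p * s - q * r ≠ 0) :
    ∃! u : K × K, p * u.1 + q * u.2 = f₁ ∧ r * u.1 + s * u.2 = f₂ := by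
  refine ⟨((s * f₁ - q * f₂) / (p * s - q * r), (p * f₂ - r * f₁) / (p * s - q * r)), ?_, ?_⟩
  · constructor <;>
    · rw [← mul_div_assoc, ← mul_div_assoc, ← add_div, div_eq_iff hdet]
      ring
  · intro u hu
    ext
    · rw [eq_div_iff hdet, mul_comm]
      exact det_mul_fst_of_linear_system hu
    · rw [eq_div_iff hdet, mul_comm]
      exact det_mul_snd_of_linear_system hu

end LinearSystem

theorem sq_le_of_le_mul_add_mul {x p q y z : ℝ} (hx : 0 ≤ x) (h : x ≤ p * y + q * z) :
    x ^ 2 ≤ (p ^ 2 + q ^ 2) * (y ^ 2 + z ^ 2) :=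
  calc x ^ 2 ≤ (p * y + q * z) ^ 2 := pow_le_pow_left₀ hx h 2
    _ ≤ (p ^ 2 + q ^ 2) * (y ^ 2 + z ^ 2) := by nlinarith [sq_nonneg (p * z - q * y)]

section Asymptotics

variable {𝕜 : Type*} [NormedField 𝕜] {b : 𝕜}

theorem tendsto_div_mul_add_cobounded (hb : b ≠ 0) (c : 𝕜) :
    Tendsto (fun z => z / (z * b + c)) (cobounded 𝕜) (𝓝 b⁻¹) := by
  have h : Tendsto (fun z : 𝕜 => (b + c * z⁻¹)⁻¹) (cobounded 𝕜) (𝓝 b⁻¹) := by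
    simpa using (tendsto_const_nhds.add (tendsto_inv₀_cobounded.const_mul c)).inv₀
      (by simpa using hb)
  refine h.congr' ?_
  filter_upwards [eventually_ne_cobounded 0] with z hz
  field_simp

theorem tendsto_inv_mul_add_cobounded (hb : b ≠ 0) (c : 𝕜) :
    Tendsto (fun z => (z * b + c)⁻¹) (cobounded 𝕜) (𝓝 0) := by
  have h := tendsto_inv₀_cobounded.mul (tendsto_div_mul_add_cobounded hb c)
  rw [zero_mul] at h
  refine h.congr' ?_
  filter_upwards [eventually_ne_cobounded 0] with z hz
  field_simp

end Asymptotics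

theorem Int.tendsto_cast_sq_cofinite_cobounded :
    Tendsto (fun n : ℤ => (n : ℂ) ^ 2) cofinite (cobounded ℂ) := by
  have h := tendsto_norm_atTop_iff_cobounded.2
    (Metric.cobounded_eq_cocompact (α := ℝ) ▸ Int.tendsto_coe_cofinite)
  rw [← tendsto_norm_atTop_iff_cobounded]
  simp only [norm_pow]
  refine (tendsto_pow_atTop two_ne_zero).comp ?_
  convert h using 2 with n
  simp

theorem exists_norm_le_of_tendsto_cofinite {ι E : Type*} [SeminormedAddCommGroup E] {g : ι → E}
    {L : E} (hg : Tendsto g cofinite (𝓝 L)) : ∃ C, ∀ i, ‖g i‖ ≤ C := by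
  obtain ⟨C, hC⟩ := isBounded_iff_forall_norm_le.1 (Metric.isBounded_range_of_tendsto_cofinite hg)
  exact ⟨C, fun i => hC _ ⟨i, rfl⟩⟩

namespace FitzHughNagumo

variable (a : ℝ) (l : ℂ) (n : ℤ) (f₁ f₂ : ℂ)

def blockDet : ℂ := l ^ 2 + (n : ℂ) ^ 2 * l + (a : ℂ) * ((n : ℂ) ^ 2 - (a : ℂ)) + 1

def SolvesBlock (u : ℂ × ℂ) : Prop :=
  (l + (n : ℂ) ^ 2 - (a : ℂ)) * u.1 + u.2 = f₁ ∧ -u.1 + (l + (a : ℂ)) * u.2 = f₂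

variable {a l n f₁ f₂}

theorem blockDet_eq_det :
    blockDet a l n = (l + (n : ℂ) ^ 2 - a) * (l + a) - 1 * (-1) := by
  unfold blockDet; ring

theorem blockDet_eq_affine : blockDet a l n = (n : ℂ) ^ 2 * (l + a) + (l ^ 2 - a ^ 2 + 1) := by
  unfold blockDet; ring

theorem solvesBlock_iff {u : ℂ × ℂ} :
    SolvesBlock a l n f₁ f₂ u ↔
      (l + (n : ℂ) ^ 2 - a) * u.1 + 1 * u.2 = f₁ ∧ -1 * u.1 + (l + a) * u.2 = f₂ := by
  simp [SolvesBlock]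

theorem existsUnique_solvesBlock (hD : blockDet a l n ≠ 0) :
    ∃! u, SolvesBlock a l n f₁ f₂ u := by
  simp_rw [solvesBlock_iff]
  exact existsUnique_linear_system (blockDet_eq_det ▸ hD)

theorem blockDet_mul_fst {u : ℂ × ℂ} (hu : SolvesBlock a l n f₁ f₂ u) :
    blockDet a l n * u.1 = (l + a) * f₁ - 1 * f₂ :=
  blockDet_eq_det ▸ det_mul_fst_of_linear_system (solvesBlock_iff.1 hu)

theorem blockDet_mul_snd {u : ℂ × ℂ} (hu : SolvesBlock a l n f₁ f₂ u) :
    blockDet a l n * u.2 = (l + (n : ℂ) ^ 2 - a) * f₂ - -1 * f₁ :=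
  blockDet_eq_det ▸ det_mul_snd_of_linear_system (solvesBlock_iff.1 hu)

theorem exists_bound_blockDet (hl : l ≠ -(a : ℂ)) :
    ∃ C > 0, ∀ n : ℤ, ‖(n : ℂ) ^ 2 / blockDet a l n‖ ≤ C ∧ ‖(blockDet a l n)⁻¹‖ ≤ C := by
  have hb : l + a ≠ 0 := fun h => hl (eq_neg_of_add_eq_zero_left h)
  simp_rw [blockDet_eq_affine]
  obtain ⟨C₁, hC₁⟩ := exists_norm_le_of_tendsto_cofinite
    ((tendsto_div_mul_add_cobounded hb _).comp Int.tendsto_cast_sq_cofinite_cobounded)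
  obtain ⟨C₂, hC₂⟩ := exists_norm_le_of_tendsto_cofinite
    ((tendsto_inv_mul_add_cobounded hb _).comp Int.tendsto_cast_sq_cofinite_cobounded)
  exact ⟨max (max C₁ C₂) 1, by positivity, fun n =>
    ⟨(hC₁ n).trans (by simp), (hC₂ n).trans (by simp)⟩⟩

variable {C : ℝ} {u : ℂ × ℂ}

theorem sq_mul_norm_fst_le (hD : blockDet a l n ≠ 0) (hu : SolvesBlock a l n f₁ f₂ u)
    (hC : ‖(n : ℂ) ^ 2 / blockDet a l n‖ ≤ C) :
    (n : ℝ) ^ 2 * ‖u.1‖ ≤ C * ‖l + a‖ * ‖f₁‖ + C * ‖f₂‖ := by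
  have hu₁ : (n : ℂ) ^ 2 * u.1 = (n : ℂ) ^ 2 / blockDet a l n * ((l + a) * f₁ - 1 * f₂) := by
    rw [← blockDet_mul_fst hu]
    field_simp
  calc (n : ℝ) ^ 2 * ‖u.1‖ = ‖(n : ℂ) ^ 2 * u.1‖ := by simp
    _ ≤ C * (‖l + a‖ * ‖f₁‖ + ‖f₂‖) := by
      rw [hu₁, norm_mul]
      refine mul_le_mul hC ((norm_sub_le _ _).trans_eq ?_) (norm_nonneg _)
        ((norm_nonneg _).trans hC)
      rw [norm_mul, one_mul]
    _ = C * ‖l + a‖ * ‖f₁‖ + C * ‖f₂‖ := by ring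

theorem norm_snd_le (hD : blockDet a l n ≠ 0) (hu : SolvesBlock a l n f₁ f₂ u)
    (hC₁ : ‖(n : ℂ) ^ 2 / blockDet a l n‖ ≤ C) (hC₂ : ‖(blockDet a l n)⁻¹‖ ≤ C) :
    ‖u.2‖ ≤ C * ‖f₁‖ + C * (1 + ‖l - a‖) * ‖f₂‖ := by
  have hu₂ : u.2 = (blockDet a l n)⁻¹ * f₁ +
      ((n : ℂ) ^ 2 / blockDet a l n + (l - a) * (blockDet a l n)⁻¹) * f₂ := by
    rw [eq_comm, ← mul_right_inj' hD, blockDet_mul_snd hu]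
    field_simp
    ring
  rw [hu₂]
  refine (norm_add_le _ _).trans ?_
  rw [norm_mul, norm_mul]
  have hC : ‖(n : ℂ) ^ 2 / blockDet a l n + (l - a) * (blockDet a l n)⁻¹‖ ≤ C * (1 + ‖l - a‖) :=
    calc _ ≤ ‖(n : ℂ) ^ 2 / blockDet a l n‖ + ‖l - a‖ * ‖(blockDet a l n)⁻¹‖ := by
          rw [← norm_mul]; exact norm_add_le _ _
      _ ≤ C + ‖l - a‖ * C := by gcongr
      _ = C * (1 + ‖l - a‖) := by ring
  gcongr

end FitzHughNagumo

/-- Unique solvability and uniform a priori bound for the Fourier-block systems of the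
FitzHugh–Nagumo resolvent equation: if `λ ≠ -a` and `D_n(λ) ≠ 0` for all `n ∈ ℤ`, then each
2×2 system has a unique solution satisfying `n⁴|u₁|² + |u₂|² ≤ K(|f₁|² + |f₂|²)`. -/
theorem FN_fourier_block_bound (a : ℝ) (l : ℂ) (hl : l ≠ -(a : ℂ))
    (hD : ∀ n : ℤ, l ^ 2 + (n : ℂ) ^ 2 * l + (a : ℂ) * ((n : ℂ) ^ 2 - (a : ℂ)) + 1 ≠ 0) :
    ∃ K > (0 : ℝ), ∀ (n : ℤ) (f₁ f₂ : ℂ),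
      (∃! u : ℂ × ℂ,
        (l + (n : ℂ) ^ 2 - (a : ℂ)) * u.1 + u.2 = f₁ ∧ -u.1 + (l + (a : ℂ)) * u.2 = f₂) ∧
      ∀ u : ℂ × ℂ,
        ((l + (n : ℂ) ^ 2 - (a : ℂ)) * u.1 + u.2 = f₁ ∧ -u.1 + (l + (a : ℂ)) * u.2 = f₂) →
        (n : ℝ) ^ 4 * ‖u.1‖ ^ 2 + ‖u.2‖ ^ 2 ≤ K * (‖f₁‖ ^ 2 + ‖f₂‖ ^ 2) := by
  obtain ⟨C, hC, hbound⟩ := FitzHughNagumo.exists_bound_blockDet hl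
  refine ⟨C ^ 2 * (‖l + a‖ ^ 2 + 1) + C ^ 2 * (1 + (1 + ‖l - a‖) ^ 2), by positivity,
    fun n f₁ f₂ => ⟨FitzHughNagumo.existsUnique_solvesBlock (hD n), fun u hu => ?_⟩⟩
  obtain ⟨hC₁, hC₂⟩ := hbound n
  have h₁ := sq_le_of_le_mul_add_mul (by positivity)
    (FitzHughNagumo.sq_mul_norm_fst_le (hD n) hu hC₁)
  have h₂ := sq_le_of_le_mul_add_mul (norm_nonneg _)
    (FitzHughNagumo.norm_snd_le (hD n) hu hC₁ hC₂)
  calc (n : ℝ) ^ 4 * ‖u.1‖ ^ 2 + ‖u.2‖ ^ 2 = ((n : ℝ) ^ 2 * ‖u.1‖) ^ 2 + ‖u.2‖ ^ 2 := by ring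
    _ ≤ _ := add_le_add h₁ h₂
    _ = _ := by ring
end

section
/- Let a ∈ (0,1) and, for n ∈ ℤ, set D_n(λ) = λ² + n²λ + a(n² − a) + 1 for λ ∈ ℂ. Then: (i) for λ ∈ ℂ, D_0(λ) = 0 if and only if λ = i√(1−a²) or λ = −i√(1−a²); and (ii) for every n ∈ ℤ with n ≠ 0, every λ ∈ ℂ with D_n(λ) = 0 satisfies Re λ < −a/2. -/
/-- Spectral location for the FitzHugh–Nagumo Fourier-block determinants
`D_n(λ) = λ² + n²λ + a(n² - a) + 1` with `a ∈ (0,1)`: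
(i) `D₀(λ) = 0 ↔ λ = ±i√(1-a²)`; (ii) for `n ≠ 0`, roots of `D_n` satisfy `Re λ < -a/2`. -/
theorem FN_block_determinant_roots (a : ℝ) (ha : a ∈ Set.Ioo (0 : ℝ) 1) :
    (∀ l : ℂ,
      l ^ 2 + ((0 : ℤ) : ℂ) ^ 2 * l + (a : ℂ) * (((0 : ℤ) : ℂ) ^ 2 - (a : ℂ)) + 1 = 0 ↔
        l = Complex.I * (Real.sqrt (1 - a ^ 2) : ℂ) ∨
        l = -(Complex.I * (Real.sqrt (1 - a ^ 2) : ℂ))) ∧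
    (∀ n : ℤ, n ≠ 0 → ∀ l : ℂ,
      l ^ 2 + (n : ℂ) ^ 2 * l + (a : ℂ) * ((n : ℂ) ^ 2 - (a : ℂ)) + 1 = 0 →
        l.re < -a / 2) := by
  obtain ⟨ha0, ha1⟩ := ha
  have hs : (Real.sqrt (1 - a ^ 2)) ^ 2 = 1 - a ^ 2 :=
    Real.sq_sqrt (by nlinarith)
  have hsC : (Real.sqrt (1 - a ^ 2) : ℂ) ^ 2 = 1 - (a : ℂ) ^ 2 := by
    norm_cast
  constructor
  · intro l
    constructor
    · intro h
      have hprod : (l - Complex.I * (Real.sqrt (1 - a ^ 2) : ℂ)) *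
          (l + Complex.I * (Real.sqrt (1 - a ^ 2) : ℂ)) = 0 := by
        have hI : Complex.I ^ 2 = -1 := Complex.I_sq
        linear_combination h - (Real.sqrt (1 - a ^ 2) : ℂ)^2 * hI + hsC
      rcases mul_eq_zero.mp hprod with h1 | h1
      · exact Or.inl (sub_eq_zero.mp h1)
      · exact Or.inr (eq_neg_of_add_eq_zero_left h1)
    · intro h
      rcases h with h | h <;> subst h <;>
        · have hI : Complex.I ^ 2 = -1 := Complex.I_sq
          push_cast
          linear_combination (Real.sqrt (1 - a ^ 2) : ℂ)^2 * hI - hsC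
  · intro n hn l h
    have hN : (1 : ℝ) ≤ (n : ℝ) ^ 2 := by
      have h1 : (1 : ℤ) ≤ n ^ 2 := by rcases lt_or_gt_of_ne hn with h' | h' <;> nlinarith
      exact_mod_cast h1
    set x := l.re with hx
    set y := l.im with hy
    have hre : x ^ 2 - y ^ 2 + (n : ℝ) ^ 2 * x + a * ((n : ℝ) ^ 2 - a) + 1 = 0 := by
      have := congrArg Complex.re h
      simpa [Complex.ext_iff, pow_two, Complex.mul_re, Complex.mul_im] using this
    have him : y * (2 * x + (n : ℝ) ^ 2) = 0 := by
      have := congrArg Complex.im h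
      simp [Complex.ext_iff, pow_two, Complex.mul_re, Complex.mul_im] at this
      linarith [this]
    rcases mul_eq_zero.mp him with hy0 | hx0
    · -- y = 0, real root
      by_contra hcon
      push_neg at hcon
      nlinarith [mul_nonneg (by linarith : (0:ℝ) ≤ x + a/2) (by nlinarith : (0:ℝ) ≤ x + (n:ℝ)^2 - a/2)]
    · -- x = -n²/2
      have : x = -(n : ℝ) ^ 2 / 2 := by linarith
      rw [this]; nlinarith
end

section
/- Let X be a complex Banach space, L : X → X a continuous linear operator, and P_s, P_u : X → X continuous linear projections with P_s + P_u = id_X and P_s∘P_u = P_u∘P_s = 0, each commuting with L. Assume there exist M > 0 and β_s, β_u > 0 such that ‖exp(tL)∘P_u‖ ≤ M·e^{β_u t} for all t ≤ 0 and ‖exp(tL)∘P_s‖ ≤ M·e^{−β_s t} for all t ≥ 0. Let 0 ≤ η < min(β_s, β_u) and let ν : ℝ → X be differentiable with ν'(t) = L(ν(t)) for all t ∈ ℝ and sup_{t∈ℝ} e^{−η|t|}‖ν(t)‖ < ∞. Then ν(t) = 0 for all t ∈ ℝ. -/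
/-!
A solution of `ν' = Lν` is `ν t = exp (t L) (ν 0)`, so `P (ν 0) = exp (-t L) (P (ν t))` for every
`P` commuting with `L`. For `P = Pu` and `t → +∞` the dichotomy bound `e^{-βu t}` beats the growth
`e^{η t}` of `ν`; reversing time (`ν (-·)` solves the equation for `-L`) gives the same for `Ps` as
`t → -∞`. Hence both components of `ν 0` vanish.
-/

open Filter Topology NormedSpace

theorem eq_zero_of_norm_le_mul_exp_neg {E : Type*} [NormedAddCommGroup E] {x : E} {K δ : ℝ}
    (hδ : 0 < δ) (h : ∀ t ≥ 0, ‖x‖ ≤ K * Real.exp (-(δ * t))) : x = 0 := by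
  have hlim : Tendsto (fun t => K * Real.exp (-(δ * t))) atTop (𝓝 0) := by
    simpa using (Real.tendsto_exp_neg_atTop_nhds_zero.comp
      (tendsto_id.const_mul_atTop hδ)).const_mul K
  exact norm_le_zero_iff.mp <| ge_of_tendsto hlim <| eventually_atTop.2 ⟨0, h⟩

section LinearFlow

variable {X : Type*} [NormedAddCommGroup X] [NormedSpace ℂ X] [CompleteSpace X]
  {L : X →L[ℂ] X} {ν : ℝ → X}

theorem hasDerivAt_exp_ofReal_smul_apply (L : X →L[ℂ] X) (x : X) (t : ℝ) :
    HasDerivAt (fun s : ℝ => exp ((s : ℂ) • L) x) (L (exp ((t : ℂ) • L) x)) t := by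
  simpa [Function.comp_def] using
    ((hasDerivAt_exp_smul_const' L (t : ℂ)).clm_apply (hasDerivAt_const _ x)).scomp t
      Complex.ofRealCLM.hasDerivAt

theorem eq_exp_smul_apply_of_hasDerivAt (hν : ∀ t, HasDerivAt ν (L (ν t)) t) (t : ℝ) :
    ν t = exp ((t : ℂ) • L) (ν 0) := by
  refine congrFun (ODE_solution_unique_univ (v := fun _ => L) (s := fun _ => Set.univ)
    (t₀ := 0) (fun _ => L.lipschitz.lipschitzOnWith) (fun t => ⟨hν t, trivial⟩)
    (fun t => ⟨hasDerivAt_exp_ofReal_smul_apply L (ν 0) t, trivial⟩) ?_) t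
  simp

theorem apply_eq_exp_neg_smul_comp_apply {P : X →L[ℂ] X} (hPL : Commute L P)
    (hν : ∀ t, HasDerivAt ν (L (ν t)) t) (t : ℝ) :
    P (ν 0) = (exp (((-t : ℝ) : ℂ) • L)).comp P (ν t) := by
  have hback : ν 0 = exp (((-t : ℝ) : ℂ) • L) (ν t) := by
    simpa using eq_exp_smul_apply_of_hasDerivAt (ν := fun s => ν (s + t))
      (fun s => (hν (s + t)).comp_add_const s t) (-t)
  have hP : Commute P (exp (((-t : ℝ) : ℂ) • L)) := (hPL.symm.smul_right _).exp_right
  rw [hback, ContinuousLinearMap.comp_apply, ← mul_apply_eq_comp, hP.eq, mul_apply_eq_comp]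

theorem apply_eq_zero_of_exp_neg_comp_decay {P : X →L[ℂ] X} (hPL : Commute L P)
    (hν : ∀ t, HasDerivAt ν (L (ν t)) t) {M β η C : ℝ} (hηβ : η < β)
    (hP : ∀ t ≥ 0, ‖(exp (((-t : ℝ) : ℂ) • L)).comp P‖ ≤ M * Real.exp (-(β * t)))
    (hνC : ∀ t ≥ 0, ‖ν t‖ ≤ Real.exp (η * t) * C) :
    P (ν 0) = 0 := by
  refine eq_zero_of_norm_le_mul_exp_neg (K := M * C) (sub_pos.2 hηβ) fun t ht => ?_
  calc ‖P (ν 0)‖ = ‖(exp (((-t : ℝ) : ℂ) • L)).comp P (ν t)‖ := by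
        rw [← apply_eq_exp_neg_smul_comp_apply hPL hν]
    _ ≤ ‖(exp (((-t : ℝ) : ℂ) • L)).comp P‖ * ‖ν t‖ := ContinuousLinearMap.le_opNorm _ _
    _ ≤ M * Real.exp (-(β * t)) * (Real.exp (η * t) * C) :=
        mul_le_mul (hP t ht) (hνC t ht) (norm_nonneg _) ((norm_nonneg _).trans (hP t ht))
    _ = M * C * Real.exp (-((β - η) * t)) := by
        rw [show -((β - η) * t) = -(β * t) + η * t by ring, Real.exp_add]; ring

end LinearFlow

theorem weighted_homogeneous_solution_zero_general
    {X : Type*} [NormedAddCommGroup X] [NormedSpace ℂ X] [CompleteSpace X]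
    (L Ps Pu : X →L[ℂ] X)
    (hsum : Ps + Pu = ContinuousLinearMap.id ℂ X)
    (hLs : L.comp Ps = Ps.comp L) (hLu : L.comp Pu = Pu.comp L)
    (M βs βu : ℝ)
    (hu : ∀ t : ℝ, t ≤ 0 →
      ‖(NormedSpace.exp ((t : ℂ) • L)).comp Pu‖ ≤ M * Real.exp (βu * t))
    (hs : ∀ t : ℝ, 0 ≤ t →
      ‖(NormedSpace.exp ((t : ℂ) • L)).comp Ps‖ ≤ M * Real.exp (-βs * t))
    (η : ℝ) (hη : η < min βs βu)
    (ν : ℝ → X) (hν : ∀ t : ℝ, HasDerivAt ν (L (ν t)) t)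
    (C : ℝ) (hbound : ∀ t : ℝ, Real.exp (-η * |t|) * ‖ν t‖ ≤ C) :
    ∀ t : ℝ, ν t = 0 := by
  have hνC : ∀ t, ‖ν t‖ ≤ Real.exp (η * |t|) * C := fun t => by
    rw [← inv_mul_le_iff₀ (Real.exp_pos _), ← Real.exp_neg, ← neg_mul]
    exact hbound t
  have hPu : Pu (ν 0) = 0 :=
    apply_eq_zero_of_exp_neg_comp_decay hLu hν (lt_min_iff.1 hη).2
      (fun t ht => (hu (-t) (by linarith)).trans_eq (by ring_nf))
      (fun t ht => (hνC t).trans_eq (by rw [abs_of_nonneg ht]))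
  have hPs : Ps (ν 0) = 0 := by
    have hrev : ∀ t, HasDerivAt (fun s => ν (-s)) ((-L) (ν (-t))) t := fun t => by
      simpa [Function.comp_def] using (hν (-t)).scomp t (hasDerivAt_neg t)
    simpa using apply_eq_zero_of_exp_neg_comp_decay (M := M) (C := C)
      (Commute.neg_left hLs) hrev (lt_min_iff.1 hη).1 (fun t ht => by simpa using hs t ht)
      (fun t ht => by simpa [abs_of_nonneg ht] using hνC (-t))
  have h0 : ν 0 = 0 := by
    simpa [hPs, hPu] using (DFunLike.congr_fun hsum (ν 0)).symm
  intro t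
  rw [eq_exp_smul_apply_of_hasDerivAt hν t, h0, map_zero]

/-- Uniqueness in the weighted space: any solution of `ν' = Lν` with subexponential growth
`‖ν(t)‖ ≤ C e^{η|t|}`, `0 ≤ η < min(β_s, β_u)`, under an exponential dichotomy with
complementary projections `P_s + P_u = id`, vanishes identically. -/
theorem weighted_homogeneous_solution_zero
    {X : Type*} [NormedAddCommGroup X] [NormedSpace ℂ X] [CompleteSpace X]
    (L Ps Pu : X →L[ℂ] X)
    (hsum : Ps + Pu = ContinuousLinearMap.id ℂ X)
    (hPs : Ps.comp Ps = Ps) (hPu : Pu.comp Pu = Pu)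
    (hPsu : Ps.comp Pu = 0) (hPus : Pu.comp Ps = 0)
    (hLs : L.comp Ps = Ps.comp L) (hLu : L.comp Pu = Pu.comp L)
    (M βs βu : ℝ) (hM : 0 < M) (hβs : 0 < βs) (hβu : 0 < βu)
    (hu : ∀ t : ℝ, t ≤ 0 →
      ‖(NormedSpace.exp ((t : ℂ) • L)).comp Pu‖ ≤ M * Real.exp (βu * t))
    (hs : ∀ t : ℝ, 0 ≤ t →
      ‖(NormedSpace.exp ((t : ℂ) • L)).comp Ps‖ ≤ M * Real.exp (-βs * t))
    (η : ℝ) (hη0 : 0 ≤ η) (hη : η < min βs βu)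
    (ν : ℝ → X) (hν : ∀ t : ℝ, HasDerivAt ν (L (ν t)) t)
    (C : ℝ) (hbound : ∀ t : ℝ, Real.exp (-η * |t|) * ‖ν t‖ ≤ C) :
    ∀ t : ℝ, ν t = 0 :=
  weighted_homogeneous_solution_zero_general L Ps Pu hsum hLs hLu M βs βu hu hs η hη ν hν C hbound
end
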